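/- arXiv:2304.09980 — 2 statements merged into one kernel-verified Lean document; each statement's English description precedes it below -/
import Mathlib

section
/- For quaternions s, q with s ∉ [q] (i.e., s² - 2q₀s + |q|² ≠ 0), the pseudo-Cauchy kernel Q_{c,s}(q) = s² - 2q₀s + |q|² is invertible and the left slice hyperholomorphic Cauchy kernel S_L^{-1}(s,q) = (s - conj(q))(s² - 2q₀s + |q|²)^{-1} satisfies (q² - 2 Re(s) q + |s|²) S_L^{-1}(s,q) = conj(s) - q, equivalently S_L^{-1}(s,q) = -(q² - 2 Re(s) q + |s|²)^{-1}(q - conj(s)). -/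
/-!
Write `Q = s² - 2 q₀ s + |q|²` and `P = q² - 2 Re(s) q + |s|²`. Expanding in components gives the
identity `P (s - q̄) = (s̄ - q) Q`, from which the formula for the kernel follows once `P ≠ 0`.
If `P = 0`, the identity and the absence of zero divisors force `q = s̄`, and then `Q = 0` because
`s` is a root of its own characteristic polynomial, which is also that of `s̄`.
-/

open scoped Quaternion

namespace Quaternion

/-- The pseudo-Cauchy kernel `Q_{c,s}(q)` is `charPolyEval q s`. -/
noncomputable def charPolyEval (q x : ℍ[ℝ]) : ℍ[ℝ] :=
  x ^ 2 - 2 * (q.re : ℍ[ℝ]) * x + ((‖q‖ ^ 2 : ℝ) : ℍ[ℝ])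

theorem coe_two : ((2 : ℝ) : ℍ[ℝ]) = 2 := rfl

theorem coe_norm_sq (q : ℍ[ℝ]) : ((‖q‖ ^ 2 : ℝ) : ℍ[ℝ]) = star q * q := by
  rw [star_mul_self, normSq_eq_norm_mul_self, sq]

theorem charPolyEval_self (q : ℍ[ℝ]) : charPolyEval q q = 0 := by
  rw [charPolyEval, coe_norm_sq, star_eq_two_re_sub, coe_mul, coe_two]
  noncomm_ring

theorem charPolyEval_star (q x : ℍ[ℝ]) : charPolyEval (star q) x = charPolyEval q x := by
  simp only [charPolyEval, re_star, norm_star]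

theorem charPolyEval_mul_sub_star (s q : ℍ[ℝ]) :
    charPolyEval s q * (s - star q) = (star s - q) * charPolyEval q s := by
  simp only [charPolyEval, coe_norm_sq, ← coe_two]
  ext <;> simp [sq] <;> ring

theorem charPolyEval_eq_zero_symm {q x : ℍ[ℝ]} (h : charPolyEval q x = 0) :
    charPolyEval x q = 0 := by
  by_contra hx
  have : (star q - x) * charPolyEval x q = 0 := by
    rw [← charPolyEval_mul_sub_star, h, zero_mul]
  obtain rfl : star q = x := sub_eq_zero.mp ((mul_eq_zero.mp this).resolve_right hx)
  exact hx (by rw [← charPolyEval_star, star_star, charPolyEval_self])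

end Quaternion

open Quaternion in
theorem cauchy_kernel_left_eq (s q : ℍ[ℝ])
    (h : s ^ 2 - 2 * (q.re : ℍ[ℝ]) * s + ((‖q‖ ^ 2 : ℝ) : ℍ[ℝ]) ≠ 0) :
    q ^ 2 - 2 * (s.re : ℍ[ℝ]) * q + ((‖s‖ ^ 2 : ℝ) : ℍ[ℝ]) ≠ 0 ∧
    (q ^ 2 - 2 * (s.re : ℍ[ℝ]) * q + ((‖s‖ ^ 2 : ℝ) : ℍ[ℝ])) *
        ((s - star q) * (s ^ 2 - 2 * (q.re : ℍ[ℝ]) * s + ((‖q‖ ^ 2 : ℝ) : ℍ[ℝ]))⁻¹) =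
      star s - q ∧
    (s - star q) * (s ^ 2 - 2 * (q.re : ℍ[ℝ]) * s + ((‖q‖ ^ 2 : ℝ) : ℍ[ℝ]))⁻¹ =
      -((q ^ 2 - 2 * (s.re : ℍ[ℝ]) * q + ((‖s‖ ^ 2 : ℝ) : ℍ[ℝ]))⁻¹ * (q - star s)) := by
  change charPolyEval q s ≠ 0 at h
  change charPolyEval s q ≠ 0 ∧ charPolyEval s q * ((s - star q) * (charPolyEval q s)⁻¹) =
      star s - q ∧ (s - star q) * (charPolyEval q s)⁻¹ = -((charPolyEval s q)⁻¹ * (q - star s))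
  have hP : charPolyEval s q ≠ 0 := mt charPolyEval_eq_zero_symm h
  have hkernel : charPolyEval s q * ((s - star q) * (charPolyEval q s)⁻¹) = star s - q := by
    rw [← mul_assoc, charPolyEval_mul_sub_star, mul_assoc, mul_inv_cancel₀ h, mul_one]
  refine ⟨hP, hkernel, ?_⟩
  rw [← mul_neg, neg_sub, eq_inv_mul_iff_mul_eq₀ hP, hkernel]
end

section
/- If f : U → ℍ is a C³ slice hyperholomorphic function on an open set U ⊂ ℍ, then D̄f is polyanalytic of order 2, i.e., D²(D̄ f) = 0, where D is the Cauchy-Fueter operator and D̄ its conjugate. -/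
open scoped Quaternion

/-- Directional derivative of `f : ℍ → ℍ` in the direction `a`. -/
noncomputable def pd (a : ℍ[ℝ]) (f : ℍ[ℝ] → ℍ[ℝ]) : ℍ[ℝ] → ℍ[ℝ] :=
  fun q => fderiv ℝ f q a

def e1 : ℍ[ℝ] := ⟨0, 1, 0, 0⟩
def e2 : ℍ[ℝ] := ⟨0, 0, 1, 0⟩
def e3 : ℍ[ℝ] := ⟨0, 0, 0, 1⟩

/-- The Cauchy-Fueter operator `D = ∂_{q₀} + e₁∂_{q₁} + e₂∂_{q₂} + e₃∂_{q₃}`. -/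
noncomputable def Dop (f : ℍ[ℝ] → ℍ[ℝ]) : ℍ[ℝ] → ℍ[ℝ] :=
  fun q => pd 1 f q + e1 * pd e1 f q + e2 * pd e2 f q + e3 * pd e3 f q

/-- The conjugate Cauchy-Fueter operator. -/
noncomputable def DbarOp (f : ℍ[ℝ] → ℍ[ℝ]) : ℍ[ℝ] → ℍ[ℝ] :=
  fun q => pd 1 f q - e1 * pd e1 f q - e2 * pd e2 f q - e3 * pd e3 f q

/-- The Laplacian in four real variables. -/
noncomputable def Lap (f : ℍ[ℝ] → ℍ[ℝ]) : ℍ[ℝ] → ℍ[ℝ] :=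
  fun q => pd 1 (pd 1 f) q + pd e1 (pd e1 f) q + pd e2 (pd e2 f) q + pd e3 (pd e3 f) q

/-- Left slice hyperholomorphic function on `U`. -/
def IsSliceHyp (U : Set ℍ[ℝ]) (f : ℍ[ℝ] → ℍ[ℝ]) : Prop :=
  ∃ α β : ℝ → ℝ → ℍ[ℝ],
    (∀ u v : ℝ, α u (-v) = α u v ∧ β u (-v) = -β u v) ∧
    (∀ u v : ℝ,
      HasDerivAt (fun u' => α u' v) (deriv (fun v' => β u v') v) u ∧
      HasDerivAt (fun u' => β u' v) (-(deriv (fun v' => α u v') v)) u) ∧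
    (∀ q ∈ U, ∀ J : ℍ[ℝ], J.re = 0 → ‖J‖ = 1 → ∀ u v : ℝ,
      q = (u : ℍ[ℝ]) + v • J → f q = α u v + J * β u v)


/-!
Off the real axis a slice hyperholomorphic `f` has the form `f q = A (u, v) + Im q * B (u, v)`
with `u = Re q`, `v = ‖Im q‖`, where `(A, v B)` satisfies the Cauchy-Riemann system. On functions
of this form `D` and `D̄` act as first-order operators on the pair `(A, B)`:
`D : (A, B) ↦ (A_u - 3 B - v B_v, B_u + A_v / v)` and
`D̄ : (A, B) ↦ (A_u + 3 B + v B_v, B_u - A_v / v)`.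
Using `A_u = B + v B_v`, `A_v = -v B_u` and their consequence `v (B_uu + B_vv) + 2 B_v = 0`
(from `A_uv = A_vu`), the pairs of `D̄ f`, `D D̄ f` and `D² D̄ f` are `(4 B + 2 v B_v, 2 B_u)`,
`(-2 B_u, 2 B_v / v)` and `(0, 0)`. On the real axis `D² D̄ f = 0` follows by continuity.
-/

open scoped InnerProductSpace
open Topology Filter Set

noncomputable section

namespace SliceRegular

@[simp] lemma e1_re : e1.re = 0 := rfl
@[simp] lemma e1_imI : e1.imI = 1 := rfl
@[simp] lemma e1_imJ : e1.imJ = 0 := rfl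
@[simp] lemma e1_imK : e1.imK = 0 := rfl
@[simp] lemma e2_re : e2.re = 0 := rfl
@[simp] lemma e2_imI : e2.imI = 0 := rfl
@[simp] lemma e2_imJ : e2.imJ = 1 := rfl
@[simp] lemma e2_imK : e2.imK = 0 := rfl
@[simp] lemma e3_re : e3.re = 0 := rfl
@[simp] lemma e3_imI : e3.imI = 0 := rfl
@[simp] lemma e3_imJ : e3.imJ = 0 := rfl
@[simp] lemma e3_imK : e3.imK = 1 := rfl

@[simp] lemma norm_e1 : ‖e1‖ = 1 := by
  rw [norm_eq_sqrt_real_inner, Quaternion.inner_self]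
  norm_num [Quaternion.normSq_def']

lemma e1_mul_e1 : e1 * e1 = -1 := by ext <;> simp

lemma im_mul_im (x : ℍ[ℝ]) : x.im * x.im = ((-‖x.im‖ ^ 2 : ℝ) : ℍ[ℝ]) := by
  rw [← sq, Quaternion.im_sq, Quaternion.normSq_eq_norm_mul_self, sq, Quaternion.coe_neg]

def reCLM : ℍ[ℝ] →L[ℝ] ℝ :=
  LinearMap.toContinuousLinearMap
    { toFun := fun x => x.re
      map_add' := fun _ _ => rfl
      map_smul' := fun _ _ => rfl }

def imCLM : ℍ[ℝ] →L[ℝ] ℍ[ℝ] :=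
  LinearMap.toContinuousLinearMap
    { toFun := fun x => x.im
      map_add' := fun _ _ => by simp
      map_smul' := fun _ _ => by simp }

@[simp] lemma reCLM_apply (x : ℍ[ℝ]) : reCLM x = x.re := rfl
@[simp] lemma imCLM_apply (x : ℍ[ℝ]) : imCLM x = x.im := rfl

lemma dense_im_ne_zero : Dense {x : ℍ[ℝ] | x.im ≠ 0} := by
  refine interior_eq_empty_iff_dense_compl.1 (not_nonempty_iff_eq_empty.1 fun h => ?_)
  have he1 : e1 ∈ LinearMap.ker (imCLM : ℍ[ℝ] →ₗ[ℝ] ℍ[ℝ]) := by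
    rw [Submodule.eq_top_of_nonempty_interior' (LinearMap.ker (imCLM : ℍ[ℝ] →ₗ[ℝ] ℍ[ℝ])) h]
    exact Submodule.mem_top
  exact absurd (congrArg QuaternionAlgebra.imI he1) (by simp)

lemma hasFDerivAt_norm_im {x : ℍ[ℝ]} (hx : x.im ≠ 0) :
    HasFDerivAt (fun y : ℍ[ℝ] => ‖y.im‖) (‖x.im‖⁻¹ • (innerSL ℝ x.im).comp imCLM) x := by
  have h := (imCLM.hasFDerivAt (x := x)).norm_sq.sqrt (by simpa using hx)
  simp only [imCLM_apply, Real.sqrt_sq (norm_nonneg _)] at h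
  refine h.congr_fderiv ?_
  ext a
  simp
  field_simp

section Partial

variable {E : Type*} [NormedAddCommGroup E] [NormedSpace ℝ E] {φ ψ : ℝ × ℝ → E} {p : ℝ × ℝ}

def pu (φ : ℝ × ℝ → E) (p : ℝ × ℝ) : E := fderiv ℝ φ p (1, 0)

def pv (φ : ℝ × ℝ → E) (p : ℝ × ℝ) : E := fderiv ℝ φ p (0, 1)

lemma fderiv_apply_eq_pu_pv (φ : ℝ × ℝ → E) (p : ℝ × ℝ) (s t : ℝ) :
    fderiv ℝ φ p (s, t) = s • pu φ p + t • pv φ p := by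
  rw [show ((s, t) : ℝ × ℝ) = s • ((1 : ℝ), (0 : ℝ)) + t • ((0 : ℝ), (1 : ℝ)) by simp, map_add,
    map_smul, map_smul, pu, pv]

lemma hasDerivAt_pu (hφ : DifferentiableAt ℝ φ p) :
    HasDerivAt (fun u => φ (u, p.2)) (pu φ p) p.1 :=
  hφ.hasFDerivAt.comp_hasDerivAt p.1 ((hasDerivAt_id _).prodMk (hasDerivAt_const _ _))

lemma hasDerivAt_pv (hφ : DifferentiableAt ℝ φ p) :
    HasDerivAt (fun v => φ (p.1, v)) (pv φ p) p.2 :=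
  hφ.hasFDerivAt.comp_hasDerivAt p.2 ((hasDerivAt_const _ _).prodMk (hasDerivAt_id _))

lemma pu_eq_of_hasDerivAt {d : E} (hφ : DifferentiableAt ℝ φ p)
    (h : HasDerivAt (fun u => φ (u, p.2)) d p.1) : pu φ p = d :=
  (hasDerivAt_pu hφ).unique h

lemma pv_eq_of_hasDerivAt {d : E} (hφ : DifferentiableAt ℝ φ p)
    (h : HasDerivAt (fun v => φ (p.1, v)) d p.2) : pv φ p = d :=
  (hasDerivAt_pv hφ).unique h

lemma pu_congr (h : φ =ᶠ[𝓝 p] ψ) : pu φ p = pu ψ p := by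
  rw [pu, pu, h.fderiv_eq]

lemma pv_congr (h : φ =ᶠ[𝓝 p] ψ) : pv φ p = pv ψ p := by
  rw [pv, pv, h.fderiv_eq]

lemma contDiffAt_pu {n : ℕ} (h : ContDiffAt ℝ (n + 1) φ p) : ContDiffAt ℝ n (pu φ) p :=
  (h.fderiv_right (by norm_cast)).clm_apply contDiffAt_const

lemma contDiffAt_pv {n : ℕ} (h : ContDiffAt ℝ (n + 1) φ p) : ContDiffAt ℝ n (pv φ) p :=
  (h.fderiv_right (by norm_cast)).clm_apply contDiffAt_const

lemma pu_pv_comm (h : ContDiffAt ℝ 2 φ p) : pu (pv φ) p = pv (pu φ) p := by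
  have hd : DifferentiableAt ℝ (fderiv ℝ φ) p :=
    (h.fderiv_right (m := 1) (by norm_num)).differentiableAt (by norm_num)
  change fderiv ℝ (fun y => fderiv ℝ φ y (0, 1)) p (1, 0) =
    fderiv ℝ (fun y => fderiv ℝ φ y (1, 0)) p (0, 1)
  rw [fderiv_clm_apply hd (differentiableAt_const _),
    fderiv_clm_apply hd (differentiableAt_const _)]
  simpa using h.isSymmSndFDerivAt (by simp) (1, 0) (0, 1)

lemma eventually_mem_horizontal {W : Set (ℝ × ℝ)} (hW : IsOpen W) (hp : p ∈ W) :
    ∀ᶠ u in 𝓝 p.1, (u, p.2) ∈ W :=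
  (continuous_id.prodMk continuous_const).continuousAt.preimage_mem_nhds (hW.mem_nhds hp)

lemma eventually_mem_vertical {W : Set (ℝ × ℝ)} (hW : IsOpen W) (hp : p ∈ W) :
    ∀ᶠ v in 𝓝 p.2, (p.1, v) ∈ W :=
  (continuous_const.prodMk continuous_id).continuousAt.preimage_mem_nhds (hW.mem_nhds hp)

end Partial

-- `∑ᵢ eᵢ ⟪ω, eᵢ⟫ = ω.im` and `∑ᵢ eᵢ eᵢ = -3`
lemma Dop_eq_of_pd {f : ℍ[ℝ] → ℍ[ℝ]} {x X Y H ω : ℍ[ℝ]}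
    (hpd : ∀ a, pd a f x = a.re • X + ⟪ω, a.im⟫_ℝ • Y + a.im * H) :
    Dop f x = X + ω.im * Y - (3 : ℝ) • H := by
  simp only [Dop, hpd]
  ext <;> simp [Quaternion.inner_def] <;> ring

lemma DbarOp_eq_of_pd {f : ℍ[ℝ] → ℍ[ℝ]} {x X Y H ω : ℍ[ℝ]}
    (hpd : ∀ a, pd a f x = a.re • X + ⟪ω, a.im⟫_ℝ • Y + a.im * H) :
    DbarOp f x = X - ω.im * Y + (3 : ℝ) • H := by
  simp only [DbarOp, hpd]
  ext <;> simp [Quaternion.inner_def] <;> ring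

lemma Dop_congr {f g : ℍ[ℝ] → ℍ[ℝ]} {x : ℍ[ℝ]} (h : f =ᶠ[𝓝 x] g) : Dop f x = Dop g x := by
  simp only [Dop, pd, h.fderiv_eq]

lemma DbarOp_congr {f g : ℍ[ℝ] → ℍ[ℝ]} {x : ℍ[ℝ]} (h : f =ᶠ[𝓝 x] g) :
    DbarOp f x = DbarOp g x := by
  simp only [DbarOp, pd, h.fderiv_eq]

section Smoothness

variable {U : Set ℍ[ℝ]} {f : ℍ[ℝ] → ℍ[ℝ]} {n : ℕ}

lemma contDiffOn_pd (hU : IsOpen U) (hf : ContDiffOn ℝ (n + 1) f U) (a : ℍ[ℝ]) :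
    ContDiffOn ℝ n (pd a f) U :=
  (hf.fderiv_of_isOpen hU (by norm_cast)).clm_apply contDiffOn_const

lemma contDiffOn_Dop (hU : IsOpen U) (hf : ContDiffOn ℝ (n + 1) f U) :
    ContDiffOn ℝ n (Dop f) U := by
  have h := contDiffOn_pd hU hf
  exact (((h 1).add (contDiffOn_const.mul (h e1))).add (contDiffOn_const.mul (h e2))).add
    (contDiffOn_const.mul (h e3))

lemma contDiffOn_DbarOp (hU : IsOpen U) (hf : ContDiffOn ℝ (n + 1) f U) :
    ContDiffOn ℝ n (DbarOp f) U := by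
  have h := contDiffOn_pd hU hf
  exact (((h 1).sub (contDiffOn_const.mul (h e1))).sub (contDiffOn_const.mul (h e2))).sub
    (contDiffOn_const.mul (h e3))

end Smoothness

def axialCoord (x : ℍ[ℝ]) : ℝ × ℝ := (x.re, ‖x.im‖)

def axial (g h : ℝ × ℝ → ℍ[ℝ]) (x : ℍ[ℝ]) : ℍ[ℝ] := g (axialCoord x) + x.im * h (axialCoord x)

lemma hasFDerivAt_axialCoord {x : ℍ[ℝ]} (hx : x.im ≠ 0) :
    HasFDerivAt axialCoord (reCLM.prod (‖x.im‖⁻¹ • (innerSL ℝ x.im).comp imCLM)) x :=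
  reCLM.hasFDerivAt.prodMk (hasFDerivAt_norm_im hx)

section Axial

variable {g h : ℝ × ℝ → ℍ[ℝ]} {x : ℍ[ℝ]}

lemma pd_axial (hx : x.im ≠ 0) (hg : DifferentiableAt ℝ g (axialCoord x))
    (hh : DifferentiableAt ℝ h (axialCoord x)) (a : ℍ[ℝ]) :
    pd a (axial g h) x = a.re • (pu g (axialCoord x) + x.im * pu h (axialCoord x)) +
      ⟪‖x.im‖⁻¹ • x.im, a.im⟫_ℝ • (pv g (axialCoord x) + x.im * pv h (axialCoord x)) +
      a.im * h (axialCoord x) := by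
  have hP := hasFDerivAt_axialCoord hx
  have hA : HasFDerivAt (axial g h) _ x :=
    (hg.hasFDerivAt.comp x hP).add (imCLM.hasFDerivAt.mul' (hh.hasFDerivAt.comp x hP))
  rw [pd, hA.fderiv]
  simp [fderiv_apply_eq_pu_pv, inner_smul_left, mul_add]
  abel

lemma Dop_axial (hx : x.im ≠ 0) (hg : DifferentiableAt ℝ g (axialCoord x))
    (hh : DifferentiableAt ℝ h (axialCoord x)) :
    Dop (axial g h) x = axial (fun p => pu g p - (3 : ℝ) • h p - p.2 • pv h p)
      (fun p => pu h p + p.2⁻¹ • pv g p) x := by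
  have hr : ‖x.im‖ ≠ 0 := norm_ne_zero_iff.2 hx
  rw [Dop_eq_of_pd (pd_axial hx hg hh)]
  simp only [axial, axialCoord, Quaternion.im_smul, Quaternion.im_idem, smul_mul_assoc, mul_add,
    mul_smul_comm, ← mul_assoc x.im x.im, im_mul_im, Quaternion.coe_mul_eq_smul]
  match_scalars <;> field_simp

lemma DbarOp_axial (hx : x.im ≠ 0) (hg : DifferentiableAt ℝ g (axialCoord x))
    (hh : DifferentiableAt ℝ h (axialCoord x)) :
    DbarOp (axial g h) x = axial (fun p => pu g p + (3 : ℝ) • h p + p.2 • pv h p)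
      (fun p => pu h p - p.2⁻¹ • pv g p) x := by
  have hr : ‖x.im‖ ≠ 0 := norm_ne_zero_iff.2 hx
  rw [DbarOp_eq_of_pd (pd_axial hx hg hh)]
  simp only [axial, axialCoord, Quaternion.im_smul, Quaternion.im_idem, smul_mul_assoc, mul_add,
    mul_sub, mul_smul_comm, ← mul_assoc x.im x.im, im_mul_im, Quaternion.coe_mul_eq_smul]
  match_scalars <;> field_simp

end Axial

section Transfer

variable {O : Set ℍ[ℝ]} {W : Set (ℝ × ℝ)} {F : ℍ[ℝ] → ℍ[ℝ]} {g h g' h' : ℝ × ℝ → ℍ[ℝ]}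

lemma Dop_eqOn_axial (hO : IsOpen O) (hOim : ∀ x ∈ O, x.im ≠ 0) (hOW : MapsTo axialCoord O W)
    (hF : EqOn F (axial g h) O) (hg : ∀ p ∈ W, DifferentiableAt ℝ g p)
    (hh : ∀ p ∈ W, DifferentiableAt ℝ h p)
    (hg' : EqOn (fun p => pu g p - (3 : ℝ) • h p - p.2 • pv h p) g' W)
    (hh' : EqOn (fun p => pu h p + p.2⁻¹ • pv g p) h' W) :
    EqOn (Dop F) (axial g' h') O := fun x hx => by
  rw [Dop_congr (hF.eventuallyEq_of_mem (hO.mem_nhds hx)),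
    Dop_axial (hOim x hx) (hg _ (hOW hx)) (hh _ (hOW hx)), axial, axial, ← hg' (hOW hx),
    ← hh' (hOW hx)]

lemma DbarOp_eqOn_axial (hO : IsOpen O) (hOim : ∀ x ∈ O, x.im ≠ 0) (hOW : MapsTo axialCoord O W)
    (hF : EqOn F (axial g h) O) (hg : ∀ p ∈ W, DifferentiableAt ℝ g p)
    (hh : ∀ p ∈ W, DifferentiableAt ℝ h p)
    (hg' : EqOn (fun p => pu g p + (3 : ℝ) • h p + p.2 • pv h p) g' W)
    (hh' : EqOn (fun p => pu h p - p.2⁻¹ • pv g p) h' W) :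
    EqOn (DbarOp F) (axial g' h') O := fun x hx => by
  rw [DbarOp_congr (hF.eventuallyEq_of_mem (hO.mem_nhds hx)),
    DbarOp_axial (hOim x hx) (hg _ (hOW hx)) (hh _ (hOW hx)), axial, axial, ← hg' (hOW hx),
    ← hh' (hOW hx)]

end Transfer

def sliceDomain (U : Set ℍ[ℝ]) : Set (ℝ × ℝ) := {p | 0 < p.2 ∧ (p.1 : ℍ[ℝ]) + p.2 • e1 ∈ U}

/-- If `f (u + v J) = α u v + J β u v`, then `stemA f = α` and `stemB f = β / v` on the slice
domain, read off from the slices through `e1` and `-e1`. -/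
def stemA (f : ℍ[ℝ] → ℍ[ℝ]) (p : ℝ × ℝ) : ℍ[ℝ] :=
  (2 : ℝ)⁻¹ • (f ((p.1 : ℍ[ℝ]) + p.2 • e1) + f ((p.1 : ℍ[ℝ]) + p.2 • -e1))

def stemB (f : ℍ[ℝ] → ℍ[ℝ]) (p : ℝ × ℝ) : ℍ[ℝ] :=
  (2 * p.2)⁻¹ • (e1 * (f ((p.1 : ℍ[ℝ]) + p.2 • -e1) - f ((p.1 : ℍ[ℝ]) + p.2 • e1)))

lemma re_coe_add_smul (u v : ℝ) {J : ℍ[ℝ]} (hJ : J.re = 0) : ((u : ℍ[ℝ]) + v • J).re = u := by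
  simp [hJ]

lemma norm_im_coe_add_smul (u : ℝ) {v : ℝ} (hv : 0 ≤ v) {J : ℍ[ℝ]} (hJ : J.re = 0)
    (hJn : ‖J‖ = 1) : ‖((u : ℍ[ℝ]) + v • J).im‖ = v := by
  have hJim : J.im = J := by ext <;> simp [hJ]
  simp [hJim, norm_smul, hJn, abs_of_nonneg hv]

section SliceDomain

variable {U : Set ℍ[ℝ]} {f : ℍ[ℝ] → ℍ[ℝ]} {p : ℝ × ℝ}

lemma isOpen_sliceDomain (hU : IsOpen U) : IsOpen (sliceDomain U) :=
  (isOpen_lt continuous_const continuous_snd).inter <| hU.preimage <|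
    (Quaternion.continuous_coe.comp continuous_fst).add (continuous_snd.smul continuous_const)

lemma isOpen_offAxis (hU : IsOpen U) : IsOpen (U ∩ {x : ℍ[ℝ] | x.im ≠ 0}) :=
  hU.inter (isOpen_ne_fun Quaternion.continuous_im continuous_const)

variable (hax : ∀ q ∈ U, ∀ J : ℍ[ℝ], J.re = 0 → ‖J‖ = 1 → (q.re : ℍ[ℝ]) + ‖q.im‖ • J ∈ U)
include hax

lemma coe_add_smul_mem (hp : p ∈ sliceDomain U) {J : ℍ[ℝ]} (hJ : J.re = 0) (hJn : ‖J‖ = 1) :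
    (p.1 : ℍ[ℝ]) + p.2 • J ∈ U := by
  have h := hax _ hp.2 J hJ hJn
  rwa [re_coe_add_smul _ _ e1_re, norm_im_coe_add_smul _ hp.1.le e1_re norm_e1] at h

lemma mapsTo_axialCoord : MapsTo axialCoord (U ∩ {x | x.im ≠ 0}) (sliceDomain U) :=
  fun x hx => ⟨norm_pos_iff.2 hx.2, hax x hx.1 e1 rfl norm_e1⟩

lemma contDiffOn_comp_slice {n : WithTop ℕ∞} (hf : ContDiffOn ℝ n f U) {J : ℍ[ℝ]}
    (hJ : J.re = 0) (hJn : ‖J‖ = 1) :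
    ContDiffOn ℝ n (fun p : ℝ × ℝ => f ((p.1 : ℍ[ℝ]) + p.2 • J)) (sliceDomain U) := by
  refine hf.comp (ContDiff.contDiffOn ?_) fun p hp => coe_add_smul_mem hax hp hJ hJn
  exact ((algebraMapCLM ℝ ℍ[ℝ]).contDiff.comp contDiff_fst).add (contDiff_snd.smul contDiff_const)

lemma contDiffOn_stemA {n : WithTop ℕ∞} (hf : ContDiffOn ℝ n f U) :
    ContDiffOn ℝ n (stemA f) (sliceDomain U) :=
  ((contDiffOn_comp_slice hax hf e1_re norm_e1).add
    (contDiffOn_comp_slice hax hf (by simp) (by simp))).const_smul _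

lemma contDiffOn_stemB {n : WithTop ℕ∞} (hf : ContDiffOn ℝ n f U) :
    ContDiffOn ℝ n (stemB f) (sliceDomain U) :=
  ((contDiffOn_const.mul contDiffOn_snd).inv fun p hp => by simp [hp.1.ne']).smul
    (contDiffOn_const.mul ((contDiffOn_comp_slice hax hf (by simp) (by simp)).sub
      (contDiffOn_comp_slice hax hf e1_re norm_e1)))

end SliceDomain

section Stem

variable {U : Set ℍ[ℝ]} {f : ℍ[ℝ] → ℍ[ℝ]} {α β : ℝ → ℝ → ℍ[ℝ]} {p : ℝ × ℝ}
  (hax : ∀ q ∈ U, ∀ J : ℍ[ℝ], J.re = 0 → ‖J‖ = 1 → (q.re : ℍ[ℝ]) + ‖q.im‖ • J ∈ U)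
  (hrep : ∀ q ∈ U, ∀ J : ℍ[ℝ], J.re = 0 → ‖J‖ = 1 → ∀ u v : ℝ,
    q = (u : ℍ[ℝ]) + v • J → f q = α u v + J * β u v)
include hax hrep

lemma stemA_eq (hp : p ∈ sliceDomain U) : stemA f p = α p.1 p.2 := by
  rw [stemA, hrep _ hp.2 e1 e1_re norm_e1 _ _ rfl,
    hrep _ (coe_add_smul_mem hax hp (by simp) (by simp)) (-e1) (by simp) (by simp) _ _ rfl, neg_mul]
  module

lemma smul_stemB_eq (hp : p ∈ sliceDomain U) : p.2 • stemB f p = β p.1 p.2 := by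
  rw [stemB, hrep _ hp.2 e1 e1_re norm_e1 _ _ rfl,
    hrep _ (coe_add_smul_mem hax hp (by simp) (by simp)) (-e1) (by simp) (by simp) _ _ rfl]
  have hv : p.2 ≠ 0 := hp.1.ne'
  simp only [neg_mul, add_sub_add_left_eq_sub, mul_sub, mul_neg, ← mul_assoc, e1_mul_e1, one_mul]
  match_scalars
  field_simp
  ring

lemma eqOn_axial_stem : EqOn f (axial (stemA f) (stemB f)) (U ∩ {x | x.im ≠ 0}) := by
  intro x hx
  have hr : 0 < ‖x.im‖ := norm_pos_iff.2 hx.2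
  have hP := mapsTo_axialCoord hax hx
  have hx_eq : x = (x.re : ℍ[ℝ]) + ‖x.im‖ • (‖x.im‖⁻¹ • x.im) := by
    rw [smul_smul, mul_inv_cancel₀ hr.ne', one_smul, Quaternion.re_add_im]
  have hA := stemA_eq hax hrep hP
  have hB := smul_stemB_eq hax hrep hP
  simp only [axialCoord] at hA hB
  rw [hrep x hx.1 _ (by simp) (by simp [norm_smul, hr.ne']) _ _ hx_eq, axial, axialCoord, hA, ← hB,
    smul_mul_assoc, mul_smul_comm, smul_smul, inv_mul_cancel₀ hr.ne', one_smul]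

end Stem

section CauchyRiemann

variable {U : Set ℍ[ℝ]} {f : ℍ[ℝ] → ℍ[ℝ]} {p : ℝ × ℝ} (hU : IsOpen U)
  (hax : ∀ q ∈ U, ∀ J : ℍ[ℝ], J.re = 0 → ‖J‖ = 1 → (q.re : ℍ[ℝ]) + ‖q.im‖ • J ∈ U)
  (hf : ContDiffOn ℝ 1 f U) (hsh : IsSliceHyp U f)
include hU hax hf hsh

lemma pu_stemA (hp : p ∈ sliceDomain U) : pu (stemA f) p = stemB f p + p.2 • pv (stemB f) p := by
  obtain ⟨α, β, -, hCR, hrep⟩ := hsh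
  have hW := isOpen_sliceDomain hU
  have hA := ((contDiffOn_stemA hax hf).contDiffAt (hW.mem_nhds hp)).differentiableAt one_ne_zero
  have hB := ((contDiffOn_stemB hax hf).contDiffAt (hW.mem_nhds hp)).differentiableAt one_ne_zero
  have hβ : HasDerivAt (fun v => β p.1 v) (stemB f p + p.2 • pv (stemB f) p) p.2 := by
    refine (((hasDerivAt_id p.2).smul (hasDerivAt_pv hB)).congr_of_eventuallyEq ?_).congr_deriv
      (by simp [add_comm])
    filter_upwards [eventually_mem_vertical hW hp] with v hv
    exact (smul_stemB_eq hax hrep hv).symm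
  have hα := (hCR p.1 p.2).1
  rw [hβ.deriv] at hα
  refine pu_eq_of_hasDerivAt hA (hα.congr_of_eventuallyEq ?_)
  filter_upwards [eventually_mem_horizontal hW hp] with u hu
  exact stemA_eq hax hrep hu

lemma pv_stemA (hp : p ∈ sliceDomain U) : pv (stemA f) p = -(p.2 • pu (stemB f) p) := by
  obtain ⟨α, β, -, hCR, hrep⟩ := hsh
  have hW := isOpen_sliceDomain hU
  have hA := ((contDiffOn_stemA hax hf).contDiffAt (hW.mem_nhds hp)).differentiableAt one_ne_zero
  have hB := ((contDiffOn_stemB hax hf).contDiffAt (hW.mem_nhds hp)).differentiableAt one_ne_zero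
  have hα : HasDerivAt (fun v => α p.1 v) (pv (stemA f) p) p.2 := by
    refine (hasDerivAt_pv hA).congr_of_eventuallyEq ?_
    filter_upwards [eventually_mem_vertical hW hp] with v hv
    exact (stemA_eq hax hrep hv).symm
  have hβ := (hCR p.1 p.2).2
  rw [hα.deriv] at hβ
  have hβ' : HasDerivAt (fun u => β u p.2) (p.2 • pu (stemB f) p) p.1 := by
    refine ((hasDerivAt_pu hB).const_smul p.2).congr_of_eventuallyEq ?_
    filter_upwards [eventually_mem_horizontal hW hp] with u hu
    exact (smul_stemB_eq hax hrep hu).symm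
  rw [hβ'.unique hβ, neg_neg]

end CauchyRiemann

section Stages

variable {U : Set ℍ[ℝ]} {f : ℍ[ℝ] → ℍ[ℝ]} {p : ℝ × ℝ} (hU : IsOpen U)
  (hax : ∀ q ∈ U, ∀ J : ℍ[ℝ], J.re = 0 → ‖J‖ = 1 → (q.re : ℍ[ℝ]) + ‖q.im‖ • J ∈ U)
  (hf : ContDiffOn ℝ 2 f U) (hsh : IsSliceHyp U f)

include hU hax hf

lemma contDiffAt_stemA (hp : p ∈ sliceDomain U) : ContDiffAt ℝ 2 (stemA f) p :=
  (contDiffOn_stemA hax hf).contDiffAt ((isOpen_sliceDomain hU).mem_nhds hp)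

lemma contDiffAt_stemB (hp : p ∈ sliceDomain U) : ContDiffAt ℝ 2 (stemB f) p :=
  (contDiffOn_stemB hax hf).contDiffAt ((isOpen_sliceDomain hU).mem_nhds hp)

lemma differentiableAt_pu_stemB (hp : p ∈ sliceDomain U) :
    DifferentiableAt ℝ (pu (stemB f)) p :=
  (contDiffAt_pu (n := 1) (contDiffAt_stemB hU hax hf hp)).differentiableAt one_ne_zero

lemma differentiableAt_pv_stemB (hp : p ∈ sliceDomain U) :
    DifferentiableAt ℝ (pv (stemB f)) p :=
  (contDiffAt_pv (n := 1) (contDiffAt_stemB hU hax hf hp)).differentiableAt one_ne_zero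

include hsh

/-- Equality of the mixed derivatives of `stemA`, rewritten through the Cauchy-Riemann equations:
`q ↦ stemB f (q.re, ‖q.im‖)` is harmonic. -/
lemma stemB_harmonic (hp : p ∈ sliceDomain U) :
    p.2 • pu (pu (stemB f)) p + (2 : ℝ) • pv (stemB f) p + p.2 • pv (pv (stemB f)) p = 0 := by
  have hW := isOpen_sliceDomain hU
  have hf1 : ContDiffOn ℝ 1 f U := hf.of_le one_le_two
  have hB := (contDiffAt_stemB hU hax hf hp).differentiableAt two_ne_zero
  have hBu := differentiableAt_pu_stemB hU hax hf hp
  have hBv := differentiableAt_pv_stemB hU hax hf hp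
  have huv : pv (pu (stemA f)) p = (2 : ℝ) • pv (stemB f) p + p.2 • pv (pv (stemB f)) p := by
    rw [pv_congr (Eventually.mono (hW.mem_nhds hp) fun z hz => pu_stemA hU hax hf1 hsh hz)]
    refine pv_eq_of_hasDerivAt (hB.add (differentiableAt_snd.smul hBv))
      (((hasDerivAt_pv hB).add ((hasDerivAt_id _).smul (hasDerivAt_pv hBv))).congr_deriv ?_)
    simp only [id, one_smul, Prod.mk.eta]
    module
  have hvu : pu (pv (stemA f)) p = -(p.2 • pu (pu (stemB f)) p) := by
    rw [pu_congr (Eventually.mono (hW.mem_nhds hp) fun z hz => pv_stemA hU hax hf1 hsh hz)]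
    exact pu_eq_of_hasDerivAt (differentiableAt_snd.smul hBu).neg
      ((hasDerivAt_pu hBu).const_smul p.2).neg
  have h := pu_pv_comm (contDiffAt_stemA hU hax hf hp)
  rw [hvu, huv] at h
  linear_combination (norm := module) -h

lemma DbarOp_eqOn_axial_stem :
    EqOn (DbarOp f) (axial (fun p => (4 : ℝ) • stemB f p + (2 * p.2) • pv (stemB f) p)
      (fun p => (2 : ℝ) • pu (stemB f) p)) (U ∩ {x | x.im ≠ 0}) := by
  have ⟨α, β, _, _, hrep⟩ := hsh
  have hf1 : ContDiffOn ℝ 1 f U := hf.of_le one_le_two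
  refine DbarOp_eqOn_axial (isOpen_offAxis hU) (fun x hx => hx.2)
    (mapsTo_axialCoord hax) (eqOn_axial_stem hax hrep)
    (fun p hp => (contDiffAt_stemA hU hax hf hp).differentiableAt two_ne_zero)
    (fun p hp => (contDiffAt_stemB hU hax hf hp).differentiableAt two_ne_zero)
    (fun p hp => ?_) (fun p hp => ?_)
  · dsimp only
    rw [pu_stemA hU hax hf1 hsh hp]
    module
  · dsimp only
    rw [pv_stemA hU hax hf1 hsh hp, smul_neg, smul_smul, inv_mul_cancel₀ hp.1.ne']
    module

lemma Dop_DbarOp_eqOn_axial_stem :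
    EqOn (Dop (DbarOp f)) (axial (fun p => (-2 : ℝ) • pu (stemB f) p)
      (fun p => (2 * p.2⁻¹) • pv (stemB f) p)) (U ∩ {x | x.im ≠ 0}) := by
  refine Dop_eqOn_axial (isOpen_offAxis hU) (fun x hx => hx.2) (mapsTo_axialCoord hax)
    (DbarOp_eqOn_axial_stem hU hax hf hsh) (fun p hp => ?_) (fun p hp => ?_) (fun p hp => ?_)
    (fun p hp => ?_) <;>
  have hB := (contDiffAt_stemB hU hax hf hp).differentiableAt two_ne_zero <;>
  have hBu := differentiableAt_pu_stemB hU hax hf hp <;>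
  have hBv := differentiableAt_pv_stemB hU hax hf hp
  · fun_prop
  · fun_prop
  · have hGu : pu (fun z => (4 : ℝ) • stemB f z + (2 * z.2) • pv (stemB f) z) p =
        (4 : ℝ) • pu (stemB f) p + (2 * p.2) • pu (pv (stemB f)) p :=
      pu_eq_of_hasDerivAt (by fun_prop)
        (((hasDerivAt_pu hB).fun_const_smul _).fun_add
          ((hasDerivAt_pu hBv).fun_const_smul (2 * p.2)))
    have hHv : pv (fun z => (2 : ℝ) • pu (stemB f) z) p = (2 : ℝ) • pv (pu (stemB f)) p :=
      pv_eq_of_hasDerivAt (by fun_prop) ((hasDerivAt_pv hBu).fun_const_smul _)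
    dsimp only
    rw [hGu, hHv, pu_pv_comm (contDiffAt_stemB hU hax hf hp)]
    module
  · have hHu : pu (fun z => (2 : ℝ) • pu (stemB f) z) p = (2 : ℝ) • pu (pu (stemB f)) p :=
      pu_eq_of_hasDerivAt (by fun_prop) ((hasDerivAt_pu hBu).fun_const_smul _)
    have hGv : pv (fun z => (4 : ℝ) • stemB f z + (2 * z.2) • pv (stemB f) z) p =
        (4 : ℝ) • pv (stemB f) p + ((2 * p.2) • pv (pv (stemB f)) p + (2 : ℝ) • pv (stemB f) p) :=
      pv_eq_of_hasDerivAt (by fun_prop) ((((hasDerivAt_pv hB).fun_const_smul _).fun_add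
        (((hasDerivAt_id' _).const_mul (2 : ℝ)).fun_smul (hasDerivAt_pv hBv))).congr_deriv
        (by rw [mul_one]))
    dsimp only
    rw [hHu, hGv]
    have hv : p.2 ≠ 0 := hp.1.ne'
    linear_combination (norm := skip) (2 * p.2⁻¹) • stemB_harmonic hU hax hf hsh hp
    match_scalars <;> field_simp <;> ring

lemma Dop_Dop_DbarOp_eqOn_zero : EqOn (Dop (Dop (DbarOp f))) 0 (U ∩ {x | x.im ≠ 0}) := by
  refine fun x hx => (Dop_eqOn_axial (g' := 0) (h' := 0) (isOpen_offAxis hU) (fun x hx => hx.2)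
    (mapsTo_axialCoord hax) (Dop_DbarOp_eqOn_axial_stem hU hax hf hsh) (fun p hp => ?_)
    (fun p hp => ?_) (fun p hp => ?_) (fun p hp => ?_) hx).trans (by simp [axial]) <;>
  have hv : p.2 ≠ 0 := hp.1.ne' <;>
  have hBu := differentiableAt_pu_stemB hU hax hf hp <;>
  have hBv := differentiableAt_pv_stemB hU hax hf hp
  · fun_prop
  · fun_prop (disch := exact hv)
  · have hGu : pu (fun z => (-2 : ℝ) • pu (stemB f) z) p = (-2 : ℝ) • pu (pu (stemB f)) p :=
      pu_eq_of_hasDerivAt (by fun_prop) ((hasDerivAt_pu hBu).fun_const_smul _)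
    have hHv : pv (fun z => (2 * z.2⁻¹) • pv (stemB f) z) p =
        (2 * p.2⁻¹) • pv (pv (stemB f)) p + (2 * -(p.2 ^ 2)⁻¹) • pv (stemB f) p :=
      pv_eq_of_hasDerivAt (by fun_prop (disch := exact hv))
        (((hasDerivAt_inv hv).const_mul (2 : ℝ)).fun_smul (hasDerivAt_pv hBv))
    dsimp only
    rw [hGu, hHv, Pi.zero_apply]
    linear_combination (norm := skip) (-2 * p.2⁻¹) • stemB_harmonic hU hax hf hsh hp
    match_scalars <;> field_simp <;> ring
  · have hHu : pu (fun z => (2 * z.2⁻¹) • pv (stemB f) z) p = (2 * p.2⁻¹) • pu (pv (stemB f)) p :=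
      pu_eq_of_hasDerivAt (by fun_prop (disch := exact hv))
        ((hasDerivAt_pu hBv).fun_const_smul (2 * p.2⁻¹))
    have hGv : pv (fun z => (-2 : ℝ) • pu (stemB f) z) p = (-2 : ℝ) • pv (pu (stemB f)) p :=
      pv_eq_of_hasDerivAt (by fun_prop) ((hasDerivAt_pv hBu).fun_const_smul _)
    dsimp only
    rw [hHu, hGv, Pi.zero_apply, pu_pv_comm (contDiffAt_stemB hU hax hf hp), smul_smul]
    match_scalars
    field_simp
    ring

end Stages

end SliceRegular
end

theorem Dbar_of_sliceHyp_is_polyanalytic (U : Set ℍ[ℝ]) (hU : IsOpen U)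
    (hax : ∀ q ∈ U, ∀ J : ℍ[ℝ], J.re = 0 → ‖J‖ = 1 → (q.re : ℍ[ℝ]) + ‖q.im‖ • J ∈ U)
    (f : ℍ[ℝ] → ℍ[ℝ]) (hf : ContDiffOn ℝ 3 f U) (hsh : IsSliceHyp U f) :
    ∀ q ∈ U, Dop (Dop (DbarOp f)) q = 0 := by
  have hzero := SliceRegular.Dop_Dop_DbarOp_eqOn_zero hU hax (hf.of_le (by norm_num)) hsh
  have hcont : ContinuousOn (Dop (Dop (DbarOp f))) U :=
    (SliceRegular.contDiffOn_Dop (n := 0) hU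
      (SliceRegular.contDiffOn_Dop hU (SliceRegular.contDiffOn_DbarOp hU hf))).continuousOn
  -- the off-axis points are dense in `U`
  exact fun q hq => hzero.of_subset_closure hcont continuousOn_const inter_subset_left
    (SliceRegular.dense_im_ne_zero.open_subset_closure_inter hU) hq
end
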